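/- For all real numbers δ with 11 ≤ δ ≤ 16, the tail sum ∑_{(k,l)∈ℤ², k²+l² ≥ 8} |L₁₅(πδ(k²+l²))| · e^{−(πδ/2)(k²+l²)} ≤ 10^{−12}, where L₁₅ is the fifteenth Laguerre polynomial. -/

import Mathlib

noncomputable def laguerre (n : ℕ) (x : ℝ) : ℝ :=
  ∑ k ∈ Finset.range (n + 1), (n.choose k : ℝ) * (-x) ^ k / (Nat.factorial k : ℝ)

/-!
Write `a = πδ ≥ 34` and `t = k² + l² ≥ 8`. Bounding each term of `L₁₅` crudely gives
`|L₁₅(at)| ≤ 16·C(15,7)·(at)¹⁵`. Split `e^{-at/2} = e^{-15at/32} e^{-at/32}`: since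
`t ↦ tⁿ e^{-ct}` decreases for `t ≥ n/c`, the first factor absorbs `t¹⁵` at the cost of
`8¹⁵ e^{-15a/4}`, while the second is at most `r^|k| r^|l|` with `r = e^{-a/32} ≤ 1/2`, whose
lattice sum is `((1+r)/(1-r))² ≤ 9`. The same monotonicity bounds `a¹⁵ e^{-15a/4}` by its
value at `a = 34`.
-/

open Real

lemma abs_laguerre_le {n : ℕ} {x : ℝ} (hx : 1 ≤ x) :
    |laguerre n x| ≤ (n + 1) * n.choose (n / 2) * x ^ n := by
  have hterm : ∀ k ∈ Finset.range (n + 1),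
      |(n.choose k : ℝ) * (-x) ^ k / k.factorial| ≤ n.choose (n / 2) * x ^ n := by
    intro k hk
    have hkn : k ≤ n := Nat.lt_succ_iff.1 (Finset.mem_range.1 hk)
    rw [abs_div, abs_mul, abs_pow, abs_neg, abs_of_pos (by linarith : 0 < x), Nat.abs_cast,
      Nat.abs_cast]
    calc (n.choose k : ℝ) * x ^ k / k.factorial ≤ n.choose k * x ^ k :=
          div_le_self (by positivity) (by exact_mod_cast k.factorial_pos)
      _ ≤ n.choose (n / 2) * x ^ n := by
          gcongr
          exact_mod_cast Nat.choose_le_middle k n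
  calc |laguerre n x|
      ≤ ∑ k ∈ Finset.range (n + 1), |(n.choose k : ℝ) * (-x) ^ k / k.factorial| :=
        Finset.abs_sum_le_sum_abs _ _
    _ ≤ ∑ _k ∈ Finset.range (n + 1), (n.choose (n / 2) : ℝ) * x ^ n :=
        Finset.sum_le_sum hterm
    _ = (n + 1) * n.choose (n / 2) * x ^ n := by simp [mul_assoc]

lemma pow_mul_exp_neg_le_of_le {n : ℕ} {s t c : ℝ} (hs : 0 < s) (hst : s ≤ t)
    (hc : n / s ≤ c) :
    t ^ n * exp (-(c * t)) ≤ s ^ n * exp (-(c * s)) := by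
  have hratio : (t / s) ^ n ≤ exp (c * (t - s)) := calc
    (t / s) ^ n ≤ exp ((t - s) / s) ^ n := by
        gcongr
        · exact div_nonneg (hs.le.trans hst) hs.le
        · simpa [sub_div, div_self hs.ne'] using add_one_le_exp ((t - s) / s)
    _ = exp (n / s * (t - s)) := by rw [← exp_nat_mul]; ring_nf
    _ ≤ exp (c * (t - s)) := by gcongr
  calc t ^ n * exp (-(c * t)) = s ^ n * (t / s) ^ n * exp (-(c * t)) := by
        rw [div_pow, mul_div_cancel₀ _ (pow_ne_zero n hs.ne')]
    _ ≤ s ^ n * exp (c * (t - s)) * exp (-(c * t)) := by gcongr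
    _ = s ^ n * exp (-(c * s)) := by rw [mul_assoc, ← exp_add]; ring_nf

lemma hasSum_pow_natAbs {r : ℝ} (h0 : 0 ≤ r) (h1 : r < 1) :
    HasSum (fun k : ℤ => r ^ k.natAbs) ((1 + r) / (1 - r)) := by
  have hpos : HasSum (fun n : ℕ => r ^ (n : ℤ).natAbs) (1 - r)⁻¹ := by
    simp only [Int.natAbs_natCast]
    exact hasSum_geometric_of_lt_one h0 h1
  have hneg : HasSum (fun n : ℕ => r ^ (-(n + 1 : ℤ)).natAbs) (r * (1 - r)⁻¹) := by
    have hidx : ∀ n : ℕ, (-(n + 1 : ℤ)).natAbs = n + 1 := fun n => by omega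
    simp only [hidx, pow_succ']
    exact (hasSum_geometric_of_lt_one h0 h1).mul_left r
  convert HasSum.of_nat_of_neg_add_one (f := fun k : ℤ => r ^ k.natAbs) hpos hneg using 1
  field_simp [(by linarith : (0:ℝ) < 1 - r).ne']

lemma hasSum_pow_natAbs_mul_pow_natAbs {r : ℝ} (h0 : 0 ≤ r) (h1 : r < 1) :
    HasSum (fun p : ℤ × ℤ => r ^ p.1.natAbs * r ^ p.2.natAbs) (((1 + r) / (1 - r)) ^ 2) := by
  have h := hasSum_pow_natAbs h0 h1
  rw [sq]
  exact HasSum.mul (f := fun k : ℤ => r ^ k.natAbs) (g := fun k : ℤ => r ^ k.natAbs) h h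
    (h.summable.mul_of_nonneg h.summable (fun _ => by positivity) (fun _ => by positivity))

lemma exp_neg_mul_sq_add_sq_le {c : ℝ} (hc : 0 ≤ c) (k l : ℤ) :
    exp (-(c * ((k : ℝ) ^ 2 + (l : ℝ) ^ 2))) ≤ exp (-c) ^ k.natAbs * exp (-c) ^ l.natAbs := by
  have hsq : ∀ m : ℤ, (m.natAbs : ℝ) ≤ (m : ℝ) ^ 2 := fun m => by
    rw [Nat.cast_natAbs]; exact_mod_cast Int.natAbs_le_self_sq m
  rw [← exp_nat_mul, ← exp_nat_mul, ← exp_add]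
  gcongr
  nlinarith [hsq k, hsq l]

lemma tsum_subtype_le_of_le_of_hasSum {ι : Type*} {P : ι → Prop} {f g : ι → ℝ} {b : ℝ}
    (hf : ∀ i, P i → 0 ≤ f i) (hfg : ∀ i, P i → f i ≤ g i) (hg : HasSum g b)
    (hg0 : ∀ i, 0 ≤ g i) : ∑' i : {i // P i}, f i ≤ b := by
  have hgP : Summable fun i : {i // P i} => g i := hg.summable.subtype _
  calc ∑' i : {i // P i}, f i ≤ ∑' i : {i // P i}, g i :=
        (hgP.of_nonneg_of_le (fun i => hf i.1 i.2) (fun i => hfg i.1 i.2)).tsum_le_tsum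
          (fun i => hfg i.1 i.2) hgP
    _ ≤ ∑' i, g i := hg.summable.tsum_subtype_le g _ hg0
    _ = b := hg.tsum_eq

-- `102960 = 16 * Nat.choose 15 7`
lemma abs_laguerre_fifteen_mul_exp_le {a t : ℝ} (ha : 4 ≤ a) (ht : 8 ≤ t) :
    |laguerre 15 (a * t)| * exp (-(a / 2) * t) ≤
      102960 * 8 ^ 15 * (a ^ 15 * exp (-(15 / 4 * a))) * exp (-(a / 32 * t)) := by
  have hL : |laguerre 15 (a * t)| ≤ 102960 * (a * t) ^ 15 := by
    have := abs_laguerre_le (n := 15) (x := a * t) (by nlinarith)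
    norm_num [Nat.choose] at this
    exact this
  have hdecay : t ^ 15 * exp (-(15 * a / 32 * t)) ≤ 8 ^ 15 * exp (-(15 / 4 * a)) := by
    have := pow_mul_exp_neg_le_of_le (n := 15) (c := 15 * a / 32) (by norm_num) ht
      (by push_cast; linarith)
    convert this using 4
    ring
  calc |laguerre 15 (a * t)| * exp (-(a / 2) * t)
      ≤ 102960 * (a * t) ^ 15 * exp (-(a / 2) * t) := by gcongr
    _ = 102960 * a ^ 15 * (t ^ 15 * exp (-(15 * a / 32 * t))) * exp (-(a / 32 * t)) := by
        rw [show -(a / 2) * t = -(15 * a / 32 * t) + -(a / 32 * t) by ring, exp_add, mul_pow]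
        ring
    _ ≤ 102960 * a ^ 15 * (8 ^ 15 * exp (-(15 / 4 * a))) * exp (-(a / 32 * t)) := by gcongr
    _ = _ := by ring

lemma tail_constant_le :
    9 * 102960 * 8 ^ 15 * ((34 : ℝ) ^ 15 * exp (-(15 / 4 * 34))) ≤ 10 ^ (-(12 : ℤ)) := by
  have he : (2.7182818283 : ℝ) ^ 127 ≤ exp (15 / 4 * 34) := calc
    (2.7182818283 : ℝ) ^ 127 ≤ exp 1 ^ 127 :=
        pow_le_pow_left₀ (by norm_num) exp_one_gt_d9.le 127
    _ = exp 127 := by rw [← exp_nat_mul]; norm_num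
    _ ≤ exp (15 / 4 * 34) := exp_le_exp.2 (by norm_num)
  rw [exp_neg, zpow_neg, ← mul_assoc, ← div_eq_mul_inv, div_le_iff₀ (exp_pos _)]
  refine le_trans ?_ (mul_le_mul_of_nonneg_left he (by positivity))
  norm_num

theorem stmt_18_general (δ : ℝ) (h1 : 11 ≤ δ) :
    ∑' p : {p : ℤ × ℤ // 8 ≤ p.1 ^ 2 + p.2 ^ 2},
        |laguerre 15 (Real.pi * δ *
            (((p.1 : ℤ × ℤ).1 : ℝ) ^ 2 + ((p.1 : ℤ × ℤ).2 : ℝ) ^ 2))| *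
          Real.exp (-(Real.pi * δ / 2) *
            (((p.1 : ℤ × ℤ).1 : ℝ) ^ 2 + ((p.1 : ℤ × ℤ).2 : ℝ) ^ 2)) ≤
      10 ^ (-(12 : ℤ)) := by
  set a := π * δ
  have ha : 34 ≤ a := by nlinarith [pi_gt_d2]
  set r := exp (-(a / 32))
  have hr : r ≤ 1 / 2 := calc
    r ≤ exp (-1) := exp_le_exp.2 (by linarith)
    _ ≤ 1 / 2 := by
        rw [exp_neg, inv_le_comm₀ (exp_pos 1) (by norm_num)]; linarith [exp_one_gt_d9]
  have hsum := (hasSum_pow_natAbs_mul_pow_natAbs (exp_nonneg _)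
    (hr.trans_lt (by norm_num))).mul_left (102960 * 8 ^ 15 * (a ^ 15 * exp (-(15 / 4 * a))))
  refine (tsum_subtype_le_of_le_of_hasSum (f := fun p : ℤ × ℤ =>
      |laguerre 15 (a * ((p.1 : ℝ) ^ 2 + (p.2 : ℝ) ^ 2))| *
        exp (-(a / 2) * ((p.1 : ℝ) ^ 2 + (p.2 : ℝ) ^ 2)))
    (fun _ _ => by positivity) ?_ hsum (fun _ => by positivity)).trans ?_
  · rintro ⟨k, l⟩ hkl
    have ht : (8 : ℝ) ≤ (k : ℝ) ^ 2 + (l : ℝ) ^ 2 := by exact_mod_cast hkl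
    calc _ ≤ _ := abs_laguerre_fifteen_mul_exp_le (by linarith) ht
      _ ≤ _ := by gcongr; exact exp_neg_mul_sq_add_sq_le (by positivity) k l
  · have hgeom : (1 + r) / (1 - r) ≤ 3 := by
      rw [div_le_iff₀ (by linarith)]; linarith
    calc 102960 * 8 ^ 15 * (a ^ 15 * exp (-(15 / 4 * a))) * ((1 + r) / (1 - r)) ^ 2
        ≤ 102960 * 8 ^ 15 * (34 ^ 15 * exp (-(15 / 4 * 34))) * 3 ^ 2 := by
          gcongr 102960 * 8 ^ 15 * ?_ * ?_ ^ 2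
          · exact pow_mul_exp_neg_le_of_le (n := 15) (c := 15 / 4) (by norm_num) ha (by norm_num)
          · exact div_nonneg (by positivity) (by linarith)
      _ ≤ 10 ^ (-(12 : ℤ)) := by linarith [tail_constant_le]

theorem stmt_18 (δ : ℝ) (h1 : 11 ≤ δ) (h2 : δ ≤ 16) :
    ∑' p : {p : ℤ × ℤ // 8 ≤ p.1 ^ 2 + p.2 ^ 2},
        |laguerre 15 (Real.pi * δ *
            (((p.1 : ℤ × ℤ).1 : ℝ) ^ 2 + ((p.1 : ℤ × ℤ).2 : ℝ) ^ 2))| *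
          Real.exp (-(Real.pi * δ / 2) *
            (((p.1 : ℤ × ℤ).1 : ℝ) ^ 2 + ((p.1 : ℤ × ℤ).2 : ℝ) ^ 2)) ≤
      10 ^ (-(12 : ℤ)) :=
  stmt_18_general δ h1
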